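/- For every f ∈ K_{s+t}(φ,M) and every subset I ⊆ {1,…,n} with #I = s there is a unique decomposition f = a_I + e_I.b_I with a_I ∈ K_{s+t}(φ,M) and b_I ∈ K_t(φ,M) such that no e_J with J ⊇ I appears in a_I and no e_T with T ∩ I ≠ ∅ appears in b_I. With this notation: (a) Σ_I e_I.b_I = C(s+t, s)·f, the sum over all subsets I ⊆ {1,…,n} with #I = s; (b) if f ∈ Z_{s+t}(φ,M), then b_I ∈ Z_t(φ,M) for every such I. -/

import Mathlib

/-!
Since `(e_I.b)(J) = σ(I, J \ I) • b(J \ I)` for `J ⊇ I` and `0` otherwise, the decomposition is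
forced: `a_I` is `f` off the sets containing `I`, and `b_I(T) = σ(I,T) • f(I ∪ T)` for `T`
disjoint from `I`. Hence `e_I.b_I` is the part of `f` on the sets containing `I`, and summing over
`I` counts every `J` of size `s + t` exactly `C(s+t, s)` times. A sign computation gives
`∂(b_I)(T) = ±(∂f)(I ∪ T)`, so `b_I` is a cycle when `f` is.
-/

open Finset

section Koszul

variable {R : Type} [CommRing R] {ι : Type} [Fintype ι] [LinearOrder ι]

/-- The Koszul differential on `⋀ F ⊗ M`, modelled as `Finset ι → M`, for the Koszul
complex of the family `u : ι → R` with coefficients in `M`. -/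
noncomputable def kD (u : ι → R) (M : Type) [AddCommGroup M] [Module R M] :
    (Finset ι → M) →ₗ[R] (Finset ι → M) where
  toFun f := fun J => ∑ i ∈ Jᶜ, ((-1 : ℤ) ^ (J.filter (· < i)).card) • u i • f (insert i J)
  map_add' f g := by
    funext J
    simp [smul_add, Finset.sum_add_distrib]
  map_smul' r f := by
    funext J
    simp only [Pi.smul_apply, RingHom.id_apply]
    rw [Finset.smul_sum]
    refine Finset.sum_congr rfl fun i _ => ?_
    rw [smul_comm (u i) r, smul_comm ((-1 : ℤ) ^ (J.filter (· < i)).card) r]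

variable (u : ι → R) (M : Type) [AddCommGroup M] [Module R M]

/-- The homological degree `t` part `K_t` of the Koszul complex, i.e. the elements
supported on subsets of cardinality `t`. -/
def kSupp (t : ℕ) : Submodule R (Finset ι → M) where
  carrier := {f | ∀ J : Finset ι, J.card ≠ t → f J = 0}
  add_mem' := by
    intro f g hf hg J hJ
    simp [Pi.add_apply, hf J hJ, hg J hJ]
  zero_mem' := by intro J hJ; rfl
  smul_mem' := by
    intro c f hf J hJ
    simp [Pi.smul_apply, hf J hJ]

/-- Koszul cycles `Z_t(u, M)`. -/
noncomputable def kZ (t : ℕ) : Submodule R (Finset ι → M) :=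
  kSupp M t ⊓ LinearMap.ker (kD u M)

/-- Koszul boundaries `B_t(u, M)`. -/
noncomputable def kB (t : ℕ) : Submodule R (Finset ι → M) :=
  kSupp M t ⊓ Submodule.map (kD u M) (kSupp M (t + 1))

/-- The sign `σ(A,B) = (-1)^{#{(a,b) ∈ A×B : a > b}}`. -/
def ksign (A B : Finset ι) : ℤ := (-1) ^ ((A ×ˢ B).filter fun p => p.2 < p.1).card

/-- The multiplication `K(u,R) ⊗ K(u,M) → K(u,M)` of the Koszul complex, viewed as a module
over the exterior algebra. -/
def kMul (a : Finset ι → R) (f : Finset ι → M) : Finset ι → M :=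
  fun J => ∑ A ∈ J.powerset, ksign A (J \ A) • a A • f (J \ A)

/-- The identity element of the Koszul algebra `K(u,R)`. -/
def kOne : Finset ι → R := fun J => if J = ∅ then 1 else 0

/-- Iterated Koszul product of a list of elements of `K(u,R)`. -/
def kProd (l : List (Finset ι → R)) : Finset ι → R := l.foldr (kMul R) kOne

end Koszul


section Stmt16

variable {R : Type} [CommRing R] {ι : Type} [Fintype ι] [LinearOrder ι]
variable (u : ι → R) (M : Type) [AddCommGroup M] [Module R M]

/-- The basis element `e_I` of the Koszul algebra `K(φ,R) = ⋀ F`. -/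
def kBasis (I : Finset ι) : Finset ι → R := fun J => if J = I then 1 else 0

/-- The property that `(a, b)` is the canonical decomposition `f = a + e_I.b` where
`a ∈ K_{s+t}(φ,M)`, `b ∈ K_t(φ,M)`, no `e_J` with `J ⊇ I` appears in `a`, and no `e_T`
with `T ∩ I ≠ ∅` appears in `b`. -/
def IsDecomposition (s t : ℕ) (f : Finset ι → M) (I : Finset ι)
    (ab : (Finset ι → M) × (Finset ι → M)) : Prop :=
  ab.1 ∈ kSupp (R := R) M (s + t) ∧ ab.2 ∈ kSupp (R := R) M t ∧
    f = ab.1 + kMul (R := R) M (kBasis I) ab.2 ∧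
    (∀ J : Finset ι, I ⊆ J → ab.1 J = 0) ∧
    (∀ T : Finset ι, ¬Disjoint T I → ab.2 T = 0)

section Decomposition

variable {M}

lemma kD_apply (f : Finset ι → M) (J : Finset ι) :
    kD u M f J = ∑ i ∈ Jᶜ, ((-1 : ℤ) ^ (J.filter (· < i)).card) • u i • f (insert i J) :=
  rfl

omit [Fintype ι] in
lemma kMul_kBasis_apply (b : Finset ι → M) (I J : Finset ι) :
    kMul (R := R) M (kBasis I) b J = if I ⊆ J then ksign I (J \ I) • b (J \ I) else 0 := by
  simp [kMul, kBasis, sum_ite_eq']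

omit [Fintype ι] in
lemma ksign_smul_ksign_smul (I T : Finset ι) (m : M) : ksign I T • ksign I T • m = m := by
  rw [smul_smul, ksign, ← pow_add, Even.neg_one_pow ⟨_, rfl⟩, one_smul]

def kDecompA (f : Finset ι → M) (I : Finset ι) : Finset ι → M :=
  fun J => if I ⊆ J then 0 else f J

/-- The component `b_I`: the coefficient of `e_I ∧ e_T` in `f`, for `T` disjoint from `I`. -/
def kDecompB (f : Finset ι → M) (I : Finset ι) : Finset ι → M :=
  fun T => if Disjoint T I then ksign I T • f (I ∪ T) else 0

omit [Fintype ι] in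
lemma kMul_kBasis_kDecompB (f : Finset ι → M) (I : Finset ι) :
    kMul (R := R) M (kBasis I) (kDecompB f I) = fun J => if I ⊆ J then f J else 0 := by
  funext J
  rw [kMul_kBasis_apply]
  split_ifs with h
  · rw [kDecompB, if_pos sdiff_disjoint, union_sdiff_of_subset h, ksign_smul_ksign_smul]
  · rfl

omit [Fintype ι] in
lemma kDecompA_add_kMul_kBasis_kDecompB (f : Finset ι → M) (I : Finset ι) :
    kDecompA f I + kMul (R := R) M (kBasis I) (kDecompB f I) = f := by
  rw [kMul_kBasis_kDecompB]
  funext J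
  by_cases h : I ⊆ J <;> simp [kDecompA, h]

omit [Fintype ι] in
lemma kDecompA_mem_kSupp {n : ℕ} {f : Finset ι → M} (hf : f ∈ kSupp (R := R) M n)
    (I : Finset ι) : kDecompA f I ∈ kSupp (R := R) M n := by
  intro J hJ
  simp [kDecompA, hf J hJ]

omit [Fintype ι] in
lemma kDecompB_mem_kSupp {s t : ℕ} {f : Finset ι → M} (hf : f ∈ kSupp (R := R) M (s + t))
    {I : Finset ι} (hI : I.card = s) : kDecompB f I ∈ kSupp (R := R) M t := by
  intro T hT
  by_cases hd : Disjoint T I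
  · rw [kDecompB, if_pos hd, hf, smul_zero]
    rw [card_union_of_disjoint hd.symm, hI]
    omega
  · rw [kDecompB, if_neg hd]

omit [Fintype ι] in
lemma isDecomposition_kDecomp {s t : ℕ} {f : Finset ι → M}
    (hf : f ∈ kSupp (R := R) M (s + t)) {I : Finset ι} (hI : I.card = s) :
    IsDecomposition (R := R) M s t f I (kDecompA f I, kDecompB f I) :=
  ⟨kDecompA_mem_kSupp hf I, kDecompB_mem_kSupp hf hI,
    (kDecompA_add_kMul_kBasis_kDecompB f I).symm,
    fun J h => by simp [kDecompA, h], fun T h => by simp [kDecompB, h]⟩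

omit [Fintype ι] in
lemma IsDecomposition.snd_eq {s t : ℕ} {f : Finset ι → M} {I : Finset ι}
    {ab : (Finset ι → M) × (Finset ι → M)} (hab : IsDecomposition (R := R) M s t f I ab) :
    ab.2 = kDecompB f I := by
  obtain ⟨-, -, hf, ha, hb⟩ := hab
  funext T
  by_cases hd : Disjoint T I
  · have hIT := congrFun hf (I ∪ T)
    rw [Pi.add_apply, ha _ subset_union_left, zero_add, kMul_kBasis_apply,
      if_pos subset_union_left, union_sdiff_cancel_left hd.symm] at hIT
    rw [kDecompB, if_pos hd, hIT, ksign_smul_ksign_smul]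
  · rw [hb T hd, kDecompB, if_neg hd]

omit [Fintype ι] in
lemma IsDecomposition.eq_kDecomp {s t : ℕ} {f : Finset ι → M} {I : Finset ι}
    {ab : (Finset ι → M) × (Finset ι → M)} (hab : IsDecomposition (R := R) M s t f I ab) :
    ab = (kDecompA f I, kDecompB f I) := by
  have hb := hab.snd_eq
  refine Prod.ext (add_right_cancel (b := kMul (R := R) M (kBasis I) ab.2) ?_) hb
  rw [← hab.2.2.1, hb, kDecompA_add_kMul_kBasis_kDecompB]

lemma sum_kMul_kBasis_kDecompB {s t : ℕ} {f : Finset ι → M}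
    (hf : f ∈ kSupp (R := R) M (s + t)) :
    ∑ I ∈ univ.filter (fun I : Finset ι => I.card = s),
      kMul (R := R) M (kBasis I) (kDecompB f I) = ((s + t).choose s : ℕ) • f := by
  funext J
  simp only [kMul_kBasis_kDecompB, Finset.sum_apply, Pi.smul_apply]
  rw [← sum_filter, sum_const]
  by_cases hJ : J.card = s + t
  · have hsets : (univ.filter fun I : Finset ι => I.card = s).filter (· ⊆ J)
        = J.powersetCard s := by
      ext I
      simp [mem_powersetCard, and_comm]
    rw [hsets, card_powersetCard, hJ]
  · rw [hf J hJ, smul_zero, smul_zero]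

end Decomposition

section Differential

variable {M}

omit [Fintype ι] in
lemma ksign_eq_neg_one_pow_sum (A B : Finset ι) :
    ksign A B = (-1) ^ ∑ a ∈ A, (B.filter (· < a)).card := by
  rw [ksign, card_filter, sum_product]
  simp only [← card_filter]

omit [Fintype ι] in
lemma ksign_insert_right (I T : Finset ι) {i : ι} (hiT : i ∉ T) :
    ksign I (insert i T) = (-1) ^ (I.filter (i < ·)).card * ksign I T := by
  rw [ksign_eq_neg_one_pow_sum, ksign_eq_neg_one_pow_sum, ← pow_add, card_filter,
    ← sum_add_distrib]
  refine congrArg _ (sum_congr rfl fun a _ => ?_)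
  rw [filter_insert]
  split_ifs with h
  · rw [card_insert_of_notMem fun hm => hiT (mem_filter.1 hm).1]
    omega
  · rw [zero_add]

omit [Fintype ι] in
/-- The sign identity behind `∂(b_I)(T) = (-1)^{#I} σ(I,T) • (∂f)(I ∪ T)`. -/
lemma neg_one_pow_mul_ksign_insert {I T : Finset ι} {i : ι} (hiI : i ∉ I) (hiT : i ∉ T)
    (hd : Disjoint T I) :
    (-1 : ℤ) ^ (T.filter (· < i)).card * ksign I (insert i T) =
      (-1) ^ I.card * ksign I T * (-1) ^ ((I ∪ T).filter (· < i)).card := by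
  have hunion : ((I ∪ T).filter (· < i)).card =
      (I.filter (· < i)).card + (T.filter (· < i)).card := by
    rw [filter_union,
      card_union_of_disjoint (hd.symm.mono (filter_subset _ _) (filter_subset _ _))]
  have hsplit : (I.filter (· < i)).card + (I.filter (i < ·)).card = I.card := by
    rw [← card_filter_add_card_filter_not (s := I) (p := (· < i))]
    congr 2
    exact filter_congr fun a ha =>
      (not_lt.trans (ne_of_mem_of_not_mem ha hiI).symm.le_iff_lt).symm
  have hsq : (-1 : ℤ) ^ (I.filter (· < i)).card * (-1) ^ (I.filter (· < i)).card = 1 := by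
    rw [← pow_add, Even.neg_one_pow ⟨_, rfl⟩]
  rw [ksign_insert_right I T hiT, hunion, ← hsplit, pow_add, pow_add]
  linear_combination (-((-1 : ℤ) ^ (T.filter (· < i)).card
    * (-1) ^ (I.filter (i < ·)).card * ksign I T)) * hsq

omit [Fintype ι] in
lemma kDecompB_of_not_disjoint (f : Finset ι → M) {I T : Finset ι} (hd : ¬Disjoint T I) :
    kDecompB f I T = 0 := if_neg hd

lemma kD_kDecompB_apply (f : Finset ι → M) {I T : Finset ι} (hd : Disjoint T I) :
    kD u M (kDecompB f I) T = ((-1 : ℤ) ^ I.card * ksign I T) • kD u M f (I ∪ T) := by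
  have hsub : (I ∪ T)ᶜ ⊆ Tᶜ := compl_subset_compl.mpr subset_union_right
  rw [kD_apply, kD_apply, smul_sum, ← sum_subset hsub]
  · refine sum_congr rfl fun i hi => ?_
    have hiI : i ∉ I := fun h => mem_compl.1 hi (mem_union_left _ h)
    have hiT : i ∉ T := fun h => mem_compl.1 hi (mem_union_right _ h)
    rw [kDecompB, if_pos (disjoint_insert_left.2 ⟨hiI, hd⟩), ← union_insert, smul_comm (u i),
      smul_smul, neg_one_pow_mul_ksign_insert hiI hiT hd, ← smul_smul, ← smul_smul]
  · -- the terms with `i ∈ I` vanish, since then `insert i T` meets `I`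
    intro i hiT hiIT
    have hiI : i ∈ I := (mem_union.1 (notMem_compl.1 hiIT)).resolve_right (mem_compl.1 hiT)
    rw [kDecompB_of_not_disjoint f
      (not_disjoint_iff.2 ⟨i, mem_insert_self i T, hiI⟩), smul_zero, smul_zero]

lemma kDecompB_mem_kZ {s t : ℕ} {f : Finset ι → M} (hf : f ∈ kZ u M (s + t))
    {I : Finset ι} (hI : I.card = s) : kDecompB f I ∈ kZ u M t := by
  obtain ⟨hfs, hfD⟩ := Submodule.mem_inf.1 hf
  refine Submodule.mem_inf.2
    ⟨kDecompB_mem_kSupp hfs hI, LinearMap.mem_ker.2 (funext fun T => ?_)⟩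
  by_cases hd : Disjoint T I
  · rw [kD_kDecompB_apply u f hd, LinearMap.mem_ker.1 hfD, Pi.zero_apply, Pi.zero_apply,
      smul_zero]
  · refine sum_eq_zero fun i _ => ?_
    rw [kDecompB_of_not_disjoint f fun h => hd (h.mono_left (subset_insert i T)), smul_zero,
      smul_zero]

end Differential

/-- For every `f ∈ K_{s+t}(φ,M)` and every `I ⊆ {1,…,n}` with `#I = s` there is a unique
decomposition `f = a_I + e_I.b_I` as above; moreover
(a) `Σ_I e_I.b_I = C(s+t,s)·f`, the sum being over all `I` with `#I = s`; and
(b) if `f ∈ Z_{s+t}(φ,M)` then `b_I ∈ Z_t(φ,M)` for every such `I`. -/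
theorem koszul_decomposition (s t : ℕ) (f : Finset ι → M) (hf : f ∈ kSupp (R := R) M (s + t)) :
    (∀ I : Finset ι, I.card = s →
      ∃! ab : (Finset ι → M) × (Finset ι → M), IsDecomposition (R := R) M s t f I ab) ∧
    (∀ a b : Finset ι → Finset ι → M,
      (∀ I : Finset ι, I.card = s → IsDecomposition (R := R) M s t f I (a I, b I)) →
      ((∑ I ∈ Finset.univ.filter (fun I : Finset ι => I.card = s),
          kMul (R := R) M (kBasis I) (b I)) = ((s + t).choose s : ℕ) • f) ∧
      (f ∈ kZ u M (s + t) → ∀ I : Finset ι, I.card = s → b I ∈ kZ u M t)) := by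
  refine ⟨fun I hI => ⟨_, isDecomposition_kDecomp hf hI, fun ab hab => hab.eq_kDecomp⟩,
    fun a b hab => ?_⟩
  have hb : ∀ I : Finset ι, I.card = s → b I = kDecompB f I := fun I hI => (hab I hI).snd_eq
  refine ⟨?_, fun hfZ I hI => hb I hI ▸ kDecompB_mem_kZ u hfZ hI⟩
  rw [sum_congr rfl fun I hI => by rw [hb I (mem_filter.1 hI).2]]
  exact sum_kMul_kBasis_kDecompB hf

end Stmt16
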